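/- Let x₀ ∈ (0,π) and define xₙ = sin(xₙ₋₁) for n ≥ 1. Then the limit limₙ→∞ 2n^{3/2}·(xₙ/√3 − n^{−1/2} + (3/10)·(log n)/n^{3/2}) exists as a real number. -/

import Mathlib

/-!
With `y n = (x n ^ 2)⁻¹`, the expansion `1 / sin² x = 1 / x² + 1 / 3 + x² / 15 + O(x⁴)`
reads `y (n + 1) - y n = 1 / 3 + 1 / (15 y n) + O(1 / y n ^ 2)`. Summing the increments gives
first `y n ~ n / 3`, then `y n - n / 3 = O(log n)`, and with that the increments of
`y n - n / 3 - (1 / 5) log n` are `O(log n / n²)`, hence summable: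
`y n - n / 3 - (1 / 5) log n → A`.
Finally `x n / √3 = (n (1 + δ n))^(-1/2)` with `n δ n = 3 y n - n = O(log n)`, and
`(1 + δ)^(-1/2) = 1 - δ / 2 + O(δ²)` turns the renormalised sequence into `-3 A + o(1)`.
-/

open Filter Topology Asymptotics Finset

theorem Asymptotics.IsBigO.sum_range {E : Type*} [NormedAddCommGroup E] {f : ℕ → E}
    {g : ℕ → ℝ} (h : f =O[atTop] g) (hg : 0 ≤ g)
    (h'g : Tendsto (fun n => ∑ i ∈ range n, g i) atTop atTop) :
    (fun n => ∑ i ∈ range n, f i) =O[atTop] fun n => ∑ i ∈ range n, g i := by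
  obtain ⟨C, hC, hfg⟩ := h.exists_pos
  obtain ⟨N, hN⟩ := eventually_atTop.1 hfg.bound
  have hG : ∀ n, ‖∑ i ∈ range n, g i‖ = ∑ i ∈ range n, g i := fun n =>
    Real.norm_of_nonneg (sum_nonneg fun i _ => hg i)
  have head : (fun _ : ℕ => ∑ i ∈ range N, f i) =O[atTop] fun n => ∑ i ∈ range n, g i :=
    (isLittleO_const_left.2 <| Or.inr <| h'g.congr fun n => (hG n).symm).isBigO
  have tail : (fun n => ∑ i ∈ Ico N n, f i) =O[atTop] fun n => ∑ i ∈ range n, g i := by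
    refine IsBigO.of_bound C (Eventually.of_forall fun n => ?_)
    calc ‖∑ i ∈ Ico N n, f i‖ ≤ ∑ i ∈ Ico N n, C * g i :=
          norm_sum_le_of_le _ fun i hi => by
            simpa [Real.norm_of_nonneg (hg i)] using hN i (mem_Ico.1 hi).1
      _ ≤ ∑ i ∈ range n, C * g i :=
          sum_le_sum_of_subset_of_nonneg (fun i hi => mem_range.2 (mem_Ico.1 hi).2) fun i _ _ =>
            mul_nonneg hC.le (hg i)
      _ = C * ‖∑ i ∈ range n, g i‖ := by rw [hG, mul_sum]
  refine (head.add tail).congr' ?_ EventuallyEq.rfl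
  filter_upwards [eventually_ge_atTop N] with n hn
  exact sum_range_add_sum_Ico f hn

theorem harmonic_eq_sum_range_inv (n : ℕ) :
    (harmonic n : ℝ) = ∑ i ∈ range n, ((i : ℝ) + 1)⁻¹ := by
  simp [harmonic]

theorem isLittleO_const_log_natCast (c : ℝ) :
    (fun _ : ℕ => c) =o[atTop] fun n : ℕ => Real.log n :=
  Real.isLittleO_const_log_atTop.comp_tendsto tendsto_natCast_atTop_atTop

theorem isBigO_harmonic_log :
    (fun n : ℕ => (harmonic n : ℝ)) =O[atTop] fun n => Real.log n := by
  have hγ := (Real.tendsto_harmonic_sub_log.isBigO_one ℝ).trans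
    (isLittleO_const_log_natCast 1).isBigO
  simpa using hγ.add (isBigO_refl (fun n : ℕ => Real.log n) atTop)

theorem tendsto_harmonic_atTop : Tendsto (fun n : ℕ => (harmonic n : ℝ)) atTop atTop :=
  tendsto_atTop_mono log_add_one_le_harmonic <| Real.tendsto_log_atTop.comp <|
    tendsto_natCast_atTop_atTop.comp (tendsto_add_atTop_nat 1)

theorem summable_log_div_sq : Summable fun n : ℕ => Real.log n / (n : ℝ) ^ 2 := by
  refine summable_of_isBigO_nat (Real.summable_nat_rpow.2 (by norm_num : -(3 / 2 : ℝ) < -1)) ?_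
  have hlog := ((isLittleO_log_rpow_atTop (by norm_num : (0 : ℝ) < 1 / 2)).comp_tendsto
    tendsto_natCast_atTop_atTop).isBigO
  refine (hlog.mul (isBigO_refl (fun n : ℕ => ((n : ℝ) ^ 2)⁻¹) atTop)).congr'
    (Eventually.of_forall fun n => (div_eq_mul_inv _ _).symm) ?_
  filter_upwards [eventually_gt_atTop 0] with n hn
  have hn : (0 : ℝ) < n := Nat.cast_pos.2 hn
  simp only [Function.comp_apply]
  rw [show -(3 / 2 : ℝ) = 1 / 2 - 2 by norm_num, Real.rpow_sub hn, Real.rpow_two]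
  exact (div_eq_mul_inv _ _).symm

theorem isTheta_inv_natCast_inv_add_one :
    (fun n : ℕ => (n : ℝ)⁻¹) =Θ[atTop] fun n : ℕ => ((n : ℝ) + 1)⁻¹ :=
  (isEquivalent_of_tendsto_one (tendsto_natCast_div_add_atTop (1 : ℝ))).inv.isTheta

section Increments

variable {u : ℕ → ℝ} {a : ℝ}

theorem tendsto_div_natCast_of_tendsto_sub (h : Tendsto (fun n => u (n + 1) - u n) atTop (𝓝 a)) :
    Tendsto (fun n : ℕ => u n / n) atTop (𝓝 a) := by
  have hces := h.cesaro.add (tendsto_const_div_atTop_nhds_zero_nat (u 0))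
  rw [add_zero] at hces
  refine hces.congr fun n => ?_
  rw [sum_range_sub (f := u), inv_mul_eq_div, ← add_div, sub_add_cancel]

theorem isBigO_sub_mul_log_of_isBigO_sub
    (h : (fun n => u (n + 1) - u n - a) =O[atTop] fun n : ℕ => (n : ℝ)⁻¹) :
    (fun n : ℕ => u n - a * n) =O[atTop] fun n => Real.log n := by
  have hsum : (fun n => ∑ i ∈ range n, (u (i + 1) - u i - a)) =O[atTop]
      fun n => Real.log n := by
    have := (h.trans isTheta_inv_natCast_inv_add_one.isBigO).sum_range (fun n => by positivity)
      (by simpa only [harmonic_eq_sum_range_inv] using tendsto_harmonic_atTop)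
    simp only [← harmonic_eq_sum_range_inv] at this
    exact this.trans isBigO_harmonic_log
  refine ((isLittleO_const_log_natCast (u 0)).isBigO.add hsum).congr (fun n => ?_) fun _ => rfl
  simp only [sum_sub_distrib, sum_range_sub (f := u), sum_const, card_range, nsmul_eq_mul]
  ring

theorem exists_tendsto_sub_mul_sub_log_of_summable {c : ℝ}
    (h : Summable fun n : ℕ => u (n + 1) - u n - a - c / ((n : ℝ) + 1)) :
    ∃ A, Tendsto (fun n : ℕ => u n - a * n - c * Real.log n) atTop (𝓝 A) := by
  refine ⟨u 0 + ∑' n : ℕ, (u (n + 1) - u n - a - c / ((n : ℝ) + 1)) +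
    c * Real.eulerMascheroniConstant, ?_⟩
  refine ((tendsto_const_nhds.add h.hasSum.tendsto_sum_nat).add
    (Real.tendsto_harmonic_sub_log.const_mul c)).congr fun n => ?_
  simp only [sum_sub_distrib, sum_range_sub (f := u), sum_const, card_range, nsmul_eq_mul,
    div_eq_mul_inv, ← mul_sum, harmonic_eq_sum_range_inv]
  ring

theorem isBigO_inv_of_tendsto_div (ha : a ≠ 0)
    (h : Tendsto (fun n : ℕ => u n / n) atTop (𝓝 a)) :
    (fun n => (u n)⁻¹) =O[atTop] fun n : ℕ => (n : ℝ)⁻¹ := by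
  have hu : ∀ᶠ n in atTop, u n ≠ 0 :=
    (h.eventually_ne ha).mono fun n hn hu => hn (by simp [hu])
  have hnu : (fun n : ℕ => (n : ℝ)) =O[atTop] u :=
    isBigO_of_div_tendsto_nhds (hu.mono fun n hn h0 => absurd h0 hn) a⁻¹
      ((h.inv₀ ha).congr fun n => inv_div _ _)
  exact hnu.inv_rev ((eventually_ne_atTop 0).mono fun n hn h0 => absurd (Nat.cast_eq_zero.1 h0) hn)

theorem exists_tendsto_sub_mul_sub_log_of_isBigO {b : ℝ} (ha : a ≠ 0)
    (hu : Tendsto u atTop atTop)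
    (h : (fun n => u (n + 1) - u n - a - b / u n) =O[atTop] fun n => (u n ^ 2)⁻¹) :
    (fun n : ℕ => u n - a * n) =O[atTop] (fun n => Real.log n) ∧
      ∃ A, Tendsto (fun n : ℕ => u n - a * n - b / a * Real.log n) atTop (𝓝 A) := by
  have hinv : Tendsto (fun n => (u n)⁻¹) atTop (𝓝 0) := hu.inv_tendsto_atTop
  have hsq : (fun n => (u n ^ 2)⁻¹) =O[atTop] fun n => (u n)⁻¹ := by
    simpa [sq, mul_inv] using (isBigO_refl (fun n => (u n)⁻¹) atTop).mul (hinv.isBigO_one ℝ)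
  have hstep : (fun n => u (n + 1) - u n - a) =O[atTop] fun n => (u n)⁻¹ :=
    ((h.trans hsq).add ((isBigO_refl _ atTop).const_mul_left b)).congr
      (fun n => by rw [div_eq_mul_inv]; ring) fun _ => rfl
  have hdiv : Tendsto (fun n : ℕ => u n / n) atTop (𝓝 a) :=
    tendsto_div_natCast_of_tendsto_sub <| tendsto_sub_nhds_zero_iff.1 (hstep.trans_tendsto hinv)
  have hinvn := isBigO_inv_of_tendsto_div ha hdiv
  have hlog := isBigO_sub_mul_log_of_isBigO_sub (hstep.trans hinvn)
  refine ⟨hlog, exists_tendsto_sub_mul_sub_log_of_summable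
    (summable_of_isBigO_nat summable_log_div_sq ?_)⟩
  have hone : (fun _ : ℕ => (1 : ℝ)) =O[atTop] fun n : ℕ => Real.log n :=
    (isLittleO_const_log_natCast 1).isBigO
  have hsq_n : (fun n => (u n ^ 2)⁻¹) =O[atTop] fun n : ℕ => ((n : ℝ) ^ 2)⁻¹ :=
    (hinvn.mul hinvn).congr (fun n => by ring) (fun n => by ring)
  have hlog_n :
      (fun n : ℕ => ((n : ℝ) ^ 2)⁻¹) =O[atTop] fun n : ℕ => Real.log n / (n : ℝ) ^ 2 :=
    (hone.mul (isBigO_refl _ atTop)).congr (fun n => one_mul _) fun n => (div_eq_mul_inv _ _).symm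
  have hE := h.trans (hsq_n.trans hlog_n)
  -- `b / u n - b / (a (n + 1)) = b (a (n + 1) - u n) / (a (n + 1) u n)`, numerator `O(log n)`
  have hD : (fun n : ℕ => b / u n - b / a / ((n : ℝ) + 1)) =O[atTop]
      fun n : ℕ => Real.log n / (n : ℝ) ^ 2 := by
    have := ((((isLittleO_const_log_natCast a).isBigO.sub hlog).mul hinvn).mul
      isTheta_inv_natCast_inv_add_one.symm.isBigO).const_mul_left (b / a)
    refine this.congr' ?_ (Eventually.of_forall fun n => by simp only; ring)
    filter_upwards [hu.eventually_gt_atTop 0] with n hn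
    field_simp
    ring
  exact (hE.add hD).congr (fun n => by ring) fun _ => rfl

end Increments

section SinTaylor

open Complex

theorem Complex.sin_bound_quintic {x : ℂ} (hx : ‖x‖ ≤ 1) :
    ‖sin x - (x - x ^ 3 / 6 + x ^ 5 / 120)‖ ≤ ‖x‖ ^ 7 / 4410 :=
  calc
    ‖sin x - (x - x ^ 3 / 6 + x ^ 5 / 120)‖ =
        ‖(exp (-x * I) - ∑ m ∈ range 7, (-x * I) ^ m / m.factorial) * I / 2 -
         (exp (x * I) - ∑ m ∈ range 7, (x * I) ^ m / m.factorial) * I / 2‖ := by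
      simp [sin, field, Finset.sum_range_succ, Nat.factorial]
      grind [I_sq, two_ne_zero]
    _ ≤ ‖exp (-x * I) - ∑ m ∈ range 7, (-x * I) ^ m / m.factorial‖ / 2 +
        ‖exp (x * I) - ∑ m ∈ range 7, (x * I) ^ m / m.factorial‖ / 2 := by
      grw [norm_sub_le]
      simp
    _ ≤ ‖-x * I‖ ^ 7 * (Nat.succ 7 * (Nat.factorial 7 * (7 : ℕ) : ℝ)⁻¹) / 2 +
        ‖x * I‖ ^ 7 * (Nat.succ 7 * (Nat.factorial 7 * (7 : ℕ) : ℝ)⁻¹) / 2 := by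
      grw [exp_bound (by simpa) (by simp), exp_bound (by simpa) (by simp)]
    _ = ‖x‖ ^ 7 / 4410 := by norm_num [mul_one_div, Nat.factorial]

theorem Real.sin_bound_quintic {x : ℝ} (hx : |x| ≤ 1) :
    |Real.sin x - (x - x ^ 3 / 6 + x ^ 5 / 120)| ≤ |x| ^ 7 / 4410 := by
  simpa [← ofReal_sin, ← norm_eq_abs, ← norm_real] using
    Complex.sin_bound_quintic (x := x) (by simpa)

end SinTaylor

open Real

theorem Real.abs_inv_sin_sq_sub_le {x : ℝ} (hx0 : 0 < x) (hx : x ≤ 1 / 2) :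
    |(sin x ^ 2)⁻¹ - (x ^ 2)⁻¹ - 1 / 3 - x ^ 2 / 15| ≤ x ^ 4 := by
  obtain ⟨hlo, hhi⟩ := abs_le.1 (sin_bound_quintic (x := x) (by rw [abs_of_pos hx0]; linarith))
  rw [abs_of_pos hx0] at hlo hhi
  -- `t = x ^ 2`; the squared factors bound `sin x / x`, the others are `x ^ 2 (x⁻² + 1/3 + ⋯)`
  have hpoly (t : ℝ) (h0 : 0 ≤ t) (h1 : t ≤ 1 / 4) :
      1 ≤ (1 - t / 6 + t ^ 2 / 120 - t ^ 3 / 4410) ^ 2 * (1 + t / 3 + t ^ 2 / 15 + t ^ 3) ∧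
      (1 - t / 6 + t ^ 2 / 120 + t ^ 3 / 4410) ^ 2 * (1 + t / 3 + t ^ 2 / 15 - t ^ 3) ≤ 1 := by
    constructor <;>
    nlinarith [pow_nonneg h0 3, pow_nonneg h0 4, pow_nonneg h0 5, pow_nonneg h0 6,
      pow_nonneg h0 7, mul_nonneg h0 (sub_nonneg.2 h1)]
  obtain ⟨hLq, hUq⟩ := hpoly (x ^ 2) (sq_nonneg x) (by nlinarith)
  have hL0 : 0 < 1 - x ^ 2 / 6 + (x ^ 2) ^ 2 / 120 - (x ^ 2) ^ 3 / 4410 := by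
    nlinarith [pow_le_pow_left₀ (sq_nonneg x) (show x ^ 2 ≤ 1 by nlinarith) 3]
  set L := 1 - x ^ 2 / 6 + (x ^ 2) ^ 2 / 120 - (x ^ 2) ^ 3 / 4410
  set U := 1 - x ^ 2 / 6 + (x ^ 2) ^ 2 / 120 + (x ^ 2) ^ 3 / 4410
  have hL : x * L ≤ sin x := by
    linarith [show x * L = x - x ^ 3 / 6 + x ^ 5 / 120 - x ^ 7 / 4410 by ring]
  have hU : sin x ≤ x * U := by
    linarith [show x * U = x - x ^ 3 / 6 + x ^ 5 / 120 + x ^ 7 / 4410 by ring]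
  have hs0 : 0 < sin x := sin_pos_of_pos_of_lt_pi hx0 (by linarith [pi_gt_three])
  have hupper : (sin x ^ 2)⁻¹ ≤ (x ^ 2)⁻¹ + 1 / 3 + x ^ 2 / 15 + x ^ 4 := by
    refine (inv_anti₀ (by positivity) (pow_le_pow_left₀ (by positivity) hL 2)).trans ?_
    rw [inv_le_iff_one_le_mul₀ (by positivity)]
    calc 1 ≤ L ^ 2 * (1 + x ^ 2 / 3 + (x ^ 2) ^ 2 / 15 + (x ^ 2) ^ 3) := hLq
      _ = ((x ^ 2)⁻¹ + 1 / 3 + x ^ 2 / 15 + x ^ 4) * (x * L) ^ 2 := by field_simp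
  have hlower : (x ^ 2)⁻¹ + 1 / 3 + x ^ 2 / 15 - x ^ 4 ≤ (sin x ^ 2)⁻¹ := by
    refine le_trans ?_ (inv_anti₀ (by positivity) (pow_le_pow_left₀ hs0.le hU 2))
    rw [← one_div ((x * U) ^ 2), le_div_iff₀ (pow_pos (hs0.trans_le hU) 2)]
    calc ((x ^ 2)⁻¹ + 1 / 3 + x ^ 2 / 15 - x ^ 4) * (x * U) ^ 2
        = U ^ 2 * (1 + x ^ 2 / 3 + (x ^ 2) ^ 2 / 15 - (x ^ 2) ^ 3) := by field_simp
      _ ≤ 1 := hUq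
  rw [abs_le]
  constructor <;> linarith

section SinIterates

variable {x : ℕ → ℝ}

theorem sin_iterate_pos (hx0 : x 0 ∈ Set.Ioo 0 π) (hrec : ∀ n, x (n + 1) = sin (x n))
    (n : ℕ) : 0 < x n := by
  suffices x n ∈ Set.Ioo 0 π from this.1
  induction n with
  | zero => exact hx0
  | succ n ih =>
    rw [hrec]
    exact ⟨sin_pos_of_pos_of_lt_pi ih.1 ih.2,
      (sin_le_one _).trans_lt (by linarith [pi_gt_three])⟩

theorem tendsto_sin_iterate_zero (hpos : ∀ n, 0 < x n) (hrec : ∀ n, x (n + 1) = sin (x n)) :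
    Tendsto x atTop (𝓝 0) := by
  have hanti : Antitone x := antitone_nat_of_succ_le fun n => (hrec n).symm ▸ sin_le (hpos n).le
  obtain ⟨l, hl⟩ : ∃ l, Tendsto x atTop (𝓝 l) :=
    ⟨_, tendsto_atTop_ciInf hanti ⟨0, by rintro _ ⟨n, rfl⟩; exact (hpos n).le⟩⟩
  have hfix : sin l = l := tendsto_nhds_unique ((continuous_sin.tendsto l).comp hl)
    (((tendsto_add_atTop_iff_nat 1).2 hl).congr hrec)
  obtain rfl | hl0 := (ge_of_tendsto' hl fun n => (hpos n).le).eq_or_lt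
  · exact hl
  · exact absurd hfix (sin_lt hl0).ne

theorem isBigO_inv_sq_sin_iterate (hpos : ∀ n, 0 < x n) (hrec : ∀ n, x (n + 1) = sin (x n))
    (hx : Tendsto x atTop (𝓝 0)) :
    (fun n => (x (n + 1) ^ 2)⁻¹ - (x n ^ 2)⁻¹ - 1 / 3 - 1 / 15 / (x n ^ 2)⁻¹) =O[atTop]
      fun n => ((x n ^ 2)⁻¹ ^ 2)⁻¹ := by
  refine IsBigO.of_bound 1 ?_
  filter_upwards [hx.eventually (eventually_le_nhds (by norm_num : (0 : ℝ) < 1 / 2))] with n hn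
  convert abs_inv_sin_sq_sub_le (hpos n) hn using 1
  · rw [hrec, Real.norm_eq_abs, div_inv_eq_mul, div_mul_eq_mul_div, one_mul]
  · rw [one_mul, Real.norm_of_nonneg (by positivity), ← inv_pow, inv_inv]
    ring

end SinIterates

theorem abs_inv_sqrt_one_add_sub_le {δ : ℝ} (h : |δ| ≤ 1 / 2) :
    |(√(1 + δ))⁻¹ - 1 + δ / 2| ≤ 3 * δ ^ 2 := by
  obtain ⟨h1, h2⟩ := abs_le.1 h
  have hw2 : √(1 + δ) ^ 2 = 1 + δ := sq_sqrt (by linarith)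
  have hw : 7 / 10 ≤ √(1 + δ) := by nlinarith [sqrt_nonneg (1 + δ)]
  generalize √(1 + δ) = w at hw2 hw ⊢
  obtain rfl : δ = w ^ 2 - 1 := by linarith
  have hfactor : w⁻¹ - 1 + (w ^ 2 - 1) / 2 = (w - 1) ^ 2 * (w + 2) / (2 * w) := by
    field_simp
    ring
  rw [hfactor, abs_of_nonneg (by positivity), div_le_iff₀ (by positivity)]
  nlinarith [mul_nonneg (sq_nonneg (w - 1)) (show 0 ≤ 6 * w * (w + 1) ^ 2 - (w + 2) by nlinarith)]

theorem tendsto_natCast_mul_sq_of_isBigO_log {δ : ℕ → ℝ}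
    (h : (fun n : ℕ => n * δ n) =O[atTop] fun n => Real.log n) :
    Tendsto (fun n : ℕ => n * δ n ^ 2) atTop (𝓝 0) := by
  have hlog : Tendsto (fun n : ℕ => Real.log n ^ 2 / n) atTop (𝓝 0) := by
    simpa [Function.comp_def] using (tendsto_pow_log_div_mul_add_atTop 1 0 2 one_ne_zero).comp
      tendsto_natCast_atTop_atTop
  refine IsBigO.trans_tendsto ?_ hlog
  refine ((h.pow 2).mul (isBigO_refl (fun n : ℕ => (n : ℝ)⁻¹) atTop)).congr' ?_
    (Eventually.of_forall fun n => (div_eq_mul_inv _ _).symm)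
  filter_upwards [eventually_ne_atTop 0] with n hn
  field_simp

theorem tendsto_natCast_mul_inv_sqrt_one_add_sub {δ : ℕ → ℝ}
    (h : Tendsto (fun n : ℕ => n * δ n ^ 2) atTop (𝓝 0)) :
    Tendsto (fun n : ℕ => n * ((√(1 + δ n))⁻¹ - 1 + δ n / 2)) atTop (𝓝 0) := by
  have hsq : Tendsto (fun n => δ n ^ 2) atTop (𝓝 0) := by
    refine (by simpa using h.mul (tendsto_inv_atTop_nhds_zero_nat (𝕜 := ℝ)) :
      Tendsto (fun n : ℕ => n * δ n ^ 2 * (n : ℝ)⁻¹) atTop (𝓝 0)).congr' ?_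
    filter_upwards [eventually_ne_atTop 0] with n hn
    field_simp
  have hδ : Tendsto (fun n => |δ n|) atTop (𝓝 0) := by
    simpa [sqrt_sq_eq_abs] using hsq.sqrt
  refine squeeze_zero_norm' ?_ (by simpa using h.const_mul 3)
  filter_upwards [hδ.eventually (eventually_le_nhds (by norm_num : (0 : ℝ) < 1 / 2))] with n hn
  rw [norm_mul, Real.norm_natCast, Real.norm_eq_abs]
  calc (n : ℝ) * |(√(1 + δ n))⁻¹ - 1 + δ n / 2| ≤ n * (3 * δ n ^ 2) :=
        mul_le_mul_of_nonneg_left (abs_inv_sqrt_one_add_sub_le hn) n.cast_nonneg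
    _ = 3 * (n * δ n ^ 2) := by ring

theorem two_mul_rpow_mul_eq {n x : ℝ} (hn : 0 < n) (hx : 0 < x) :
    2 * n ^ ((3 : ℝ) / 2) *
        (x / √3 - n ^ (-(1 : ℝ) / 2) + 3 / 10 * Real.log n / n ^ ((3 : ℝ) / 2))
      = 2 * (n * ((√(1 + (3 / (n * x ^ 2) - 1)))⁻¹ - 1 + (3 / (n * x ^ 2) - 1) / 2))
        - 3 * ((x ^ 2)⁻¹ - 1 / 3 * n - 1 / 15 / (1 / 3) * Real.log n) := by
  have h32 : n ^ ((3 : ℝ) / 2) = n * √n := by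
    rw [show (3 : ℝ) / 2 = 1 + 1 / 2 by norm_num, rpow_add hn, rpow_one, sqrt_eq_rpow]
  have hneg : n ^ (-(1 : ℝ) / 2) = (√n)⁻¹ := by
    rw [neg_div, rpow_neg hn.le, sqrt_eq_rpow]
  have hsqrt : √(1 + (3 / (n * x ^ 2) - 1)) = √3 / (√n * x) := by
    rw [add_sub_cancel, sqrt_div' _ (by positivity), sqrt_mul hn.le, sqrt_sq hx.le]
  have := sqrt_pos.2 hn
  rw [h32, hneg, hsqrt]
  field_simp
  ring

/-- For the recursion `x (n+1) = sin (x n)` with `x 0 ∈ (0, π)`, the limit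
`lim 2 n^{3/2} (x n / √3 - n^{-1/2} + (3/10) (log n) / n^{3/2})` exists. -/
theorem sin_iterates_refined_limit (x : ℕ → ℝ)
    (hx0 : x 0 ∈ Set.Ioo 0 Real.pi)
    (hrec : ∀ n : ℕ, x (n + 1) = Real.sin (x n)) :
    ∃ L : ℝ, Tendsto
      (fun n : ℕ => 2 * (n : ℝ) ^ ((3 : ℝ) / 2) *
        (x n / Real.sqrt 3 - (n : ℝ) ^ (-(1 : ℝ) / 2) +
          (3 / 10) * Real.log n / (n : ℝ) ^ ((3 : ℝ) / 2)))
      atTop (nhds L) := by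
  have hpos := sin_iterate_pos hx0 hrec
  have hx := tendsto_sin_iterate_zero hpos hrec
  have hy : Tendsto (fun n => (x n ^ 2)⁻¹) atTop atTop :=
    tendsto_inv_nhdsGT_zero.comp <| tendsto_nhdsWithin_iff.2
      ⟨by simpa using hx.pow 2, .of_forall fun n => pow_pos (hpos n) 2⟩
  obtain ⟨hlog, A, hA⟩ := exists_tendsto_sub_mul_sub_log_of_isBigO (by norm_num) hy
    (isBigO_inv_sq_sin_iterate hpos hrec hx)
  have hδ : Tendsto (fun n : ℕ => n * (3 / (n * x n ^ 2) - 1) ^ 2) atTop (𝓝 0) := by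
    refine tendsto_natCast_mul_sq_of_isBigO_log ((hlog.const_mul_left 3).congr' ?_ .rfl)
    filter_upwards [eventually_ne_atTop 0] with n hn
    have := hpos n
    field_simp
  have hlim := ((tendsto_natCast_mul_inv_sqrt_one_add_sub hδ).const_mul 2).sub (hA.const_mul 3)
  rw [mul_zero, zero_sub] at hlim
  refine ⟨_, hlim.congr' ?_⟩
  filter_upwards [eventually_gt_atTop 0] with n hn
  exact (two_mul_rpow_mul_eq (Nat.cast_pos.2 hn) (hpos n)).symm
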